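/- If v is a vertex of a finite graph G and C is a cycle (ring) in G passing through v, then C is a primitive ring of the local environment B_r(v) (the subgraph induced on vertices within distance r of v, for any r at least the length of C) if and only if C is a primitive ring of G. That is, for rings containing the root, primitivity in the local atomic environment coincides with primitivity in the whole network. -/

import Mathlib

/-!
Any two vertices of a ring of length `k` are at distance at most `k / 2` in `G`. Hence a
shortest `G`-path between two ring vertices `a`, `b` stays within distance
`dist v a + dist a b ≤ k ≤ r` of the root `v`, i.e. inside `B_r(v)`, so ring distances (and ring
adjacencies) are the same in `G` and in `B_r(v)`.
-/

/-- A ring (cycle) in a graph, presented as an injective cyclic sequence of pairwise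
adjacent consecutive vertices. -/
def IsRing {V : Type*} (H : SimpleGraph V) {k : ℕ} (ρ : ZMod k → V) : Prop :=
  Function.Injective ρ ∧ ∀ i : ZMod k, H.Adj (ρ i) (ρ (i + 1))

/-- A ring is primitive in a graph H if for every pair of its vertices the graph distance in
H equals the shorter of the two arc lengths along the ring. -/
def IsPrimitiveRing {V : Type*} (H : SimpleGraph V) {k : ℕ} [NeZero k] (ρ : ZMod k → V) :
    Prop :=
  IsRing H ρ ∧ ∀ i j : ZMod k, H.dist (ρ i) (ρ j) = min (j - i).val (i - j).val

/-- The ball of radius r: the subgraph induced on vertices within distance r of the root. -/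
def ballSubgraph {V : Type*} (G : SimpleGraph V) (v : V) (r : ℕ) : SimpleGraph V where
  Adj a b := G.Adj a b ∧ G.dist v a ≤ r ∧ G.dist v b ≤ r
  symm := ⟨fun _ _ ⟨h, h1, h2⟩ => ⟨h.symm, h2, h1⟩⟩
  loopless := ⟨fun a h => G.loopless.irrefl a h.1⟩

lemma ZMod.min_val_val_neg_le_half {k : ℕ} [NeZero k] (x : ZMod k) :
    min x.val (-x).val ≤ k / 2 := by
  have := x.val_lt
  rw [ZMod.neg_val]
  split_ifs <;> omega

namespace SimpleGraph

variable {V : Type*}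

section Ball

variable {G : SimpleGraph V} {v : V} {r : ℕ}

lemma ballSubgraph_le : ballSubgraph G v r ≤ G := fun _ _ h => h.1

lemma Walk.exists_ballSubgraph_walk {a b : V} (p : G.Walk a b)
    (hp : ∀ w ∈ p.support, G.dist v w ≤ r) :
    ∃ q : (ballSubgraph G v r).Walk a b, q.length = p.length := by
  refine ⟨p.transfer _ fun e he => ?_, p.length_transfer _⟩
  induction e with
  | h x y =>
    exact ⟨p.edges_subset_edgeSet he, hp x (p.fst_mem_support_of_mem_edges he),
      hp y (p.snd_mem_support_of_mem_edges he)⟩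

lemma dist_ballSubgraph_eq {a b : V} (hva : G.Reachable v a) (hab : G.Reachable a b)
    (hr : G.dist v a + G.dist a b ≤ r) :
    (ballSubgraph G v r).dist a b = G.dist a b := by
  classical
  obtain ⟨p, hp⟩ := hab.exists_walk_length_eq_dist
  have hsupp : ∀ w ∈ p.support, G.dist v w ≤ r := fun w hw =>
    calc G.dist v w ≤ G.dist v a + G.dist a w := hva.dist_triangle_left w
      _ ≤ G.dist v a + p.length := by
        gcongr
        exact (dist_le _).trans (p.length_takeUntil_le_length hw)
      _ ≤ r := hp ▸ hr
  obtain ⟨q, hq⟩ := p.exists_ballSubgraph_walk hsupp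
  exact le_antisymm (hp ▸ hq ▸ dist_le q) (Reachable.dist_anti ballSubgraph_le ⟨q⟩)

end Ball

section ClosedSequence

variable {H : SimpleGraph V} {k : ℕ} {ρ : ZMod k → V}

lemma exists_walk_add_natCast (hadj : ∀ i, H.Adj (ρ i) (ρ (i + 1))) (i : ZMod k) (n : ℕ) :
    ∃ p : H.Walk (ρ i) (ρ (i + n)), p.length = n := by
  induction n with
  | zero => exact ⟨Walk.nil.copy rfl (by simp), by simp⟩
  | succ n ih =>
    obtain ⟨p, hp⟩ := ih
    exact ⟨(p.concat (hadj _)).copy rfl (by push_cast; rw [add_assoc]), by simp [hp]⟩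

variable [NeZero k]

lemma exists_walk_length_eq_val_sub (hadj : ∀ i, H.Adj (ρ i) (ρ (i + 1))) (a b : ZMod k) :
    ∃ p : H.Walk (ρ a) (ρ b), p.length = (b - a).val := by
  obtain ⟨p, hp⟩ := exists_walk_add_natCast hadj a (b - a).val
  have hend : ρ (a + ((b - a).val : ZMod k)) = ρ b := by
    rw [ZMod.natCast_zmod_val, add_sub_cancel]
  exact ⟨p.copy rfl hend, by simpa using hp⟩

lemma reachable_of_adj_succ (hadj : ∀ i, H.Adj (ρ i) (ρ (i + 1))) (a b : ZMod k) :
    H.Reachable (ρ a) (ρ b) :=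
  (exists_walk_length_eq_val_sub hadj a b).elim fun p _ => ⟨p⟩

lemma dist_le_half_of_adj_succ (hadj : ∀ i, H.Adj (ρ i) (ρ (i + 1))) (a b : ZMod k) :
    H.dist (ρ a) (ρ b) ≤ k / 2 := by
  have hle : ∀ a b, H.dist (ρ a) (ρ b) ≤ (b - a).val := fun a b =>
    (exists_walk_length_eq_val_sub hadj a b).elim fun p hp => hp ▸ dist_le p
  calc H.dist (ρ a) (ρ b) ≤ min (b - a).val (-(b - a)).val := by
        rw [neg_sub]
        exact le_min (hle a b) (dist_comm (G := H) ▸ hle b a)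
    _ ≤ k / 2 := (b - a).min_val_val_neg_le_half

end ClosedSequence

end SimpleGraph

open SimpleGraph in
theorem statement7_general {V : Type*} (G : SimpleGraph V) (v : V) (k r : ℕ)
    [NeZero k] (hrk : k ≤ r) (ρ : ZMod k → V)
    (hring : IsRing G ρ)
    (hroot : ∃ i : ZMod k, ρ i = v) :
    IsPrimitiveRing (ballSubgraph G v r) ρ ↔ IsPrimitiveRing G ρ := by
  obtain ⟨hinj, hadj⟩ := hring
  obtain ⟨i₀, rfl⟩ := hroot
  have hdist (i j : ZMod k) :
      (ballSubgraph G (ρ i₀) r).dist (ρ i) (ρ j) = G.dist (ρ i) (ρ j) := by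
    refine dist_ballSubgraph_eq (reachable_of_adj_succ hadj i₀ i)
      (reachable_of_adj_succ hadj i j) ?_
    have := dist_le_half_of_adj_succ hadj i₀ i
    have := dist_le_half_of_adj_succ hadj i j
    omega
  have hadjBall (i : ZMod k) : (ballSubgraph G (ρ i₀) r).Adj (ρ i) (ρ (i + 1)) :=
    ⟨hadj i, (dist_le_half_of_adj_succ hadj i₀ i).trans (by omega),
      (dist_le_half_of_adj_succ hadj i₀ (i + 1)).trans (by omega)⟩
  simp only [IsPrimitiveRing, IsRing, hdist]
  exact ⟨fun ⟨_, h⟩ => ⟨⟨hinj, hadj⟩, h⟩, fun ⟨_, h⟩ => ⟨⟨hinj, hadjBall⟩, h⟩⟩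

/-- For a ring C through a vertex v of a finite graph G, C is a primitive ring of the local
environment B_r(v) (for any r at least the length of C, with all vertices of C in B_r(v))
if and only if C is a primitive ring of G. -/
theorem statement7 {V : Type*} [Fintype V] (G : SimpleGraph V) (v : V) (k r : ℕ)
    [NeZero k] (hk : 3 ≤ k) (hrk : k ≤ r) (ρ : ZMod k → V)
    (hring : IsRing G ρ)
    (hroot : ∃ i : ZMod k, ρ i = v)
    (hball : ∀ i : ZMod k, G.dist v (ρ i) ≤ r) :
    IsPrimitiveRing (ballSubgraph G v r) ρ ↔ IsPrimitiveRing G ρ :=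
  statement7_general G v k r hrk ρ hring hroot
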